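/- For any fractal necklace F, any two points x, u ∈ F, and any integer k ≥ 1, there exists a k-level chain of F from x to u: a finite sequence (A_1,…,A_N) of k-level copies of F with x ∈ A_1 \ ⋃_{j≥2} A_j, u ∈ A_N \ ⋃_{j≤N−1} A_j, A_j ∩ A_m a singleton if |j−m| = 1 and empty if |j−m| ≥ 2. -/

import Mathlib

open Set Topology Metric Bornology

noncomputable section

/-- Euclidean space `ℝ^d`. -/
abbrev Euc (d : ℕ) := EuclideanSpace ℝ (Fin d)

/-- A fractal necklace in `ℝ^d`: the attractor `F` of a necklace IFS `f_1, …, f_n`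
(`n ≥ 3`) of contractive homeomorphisms of `ℝ^d`, where cyclically adjacent 1-level
copies meet in a single point (a main node `z k`) and non-adjacent copies are disjoint. -/
structure Necklace (d : ℕ) where
  n : ℕ
  hn : 3 ≤ n
  f : Fin n → (Euc d ≃ₜ Euc d)
  contr : ∀ k, ∃ c : NNReal, c < 1 ∧ LipschitzWith c (f k)
  F : Set (Euc d)
  Fne : F.Nonempty
  Fcpt : IsCompact F
  Fattr : F = ⋃ k, (f k) '' F
  z : Fin n → Euc d
  hz : ∀ k : Fin n, (f k) '' F ∩ (f (k + ⟨1, by omega⟩)) '' F = {z k}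
  hdisj : ∀ m k : Fin n, m ≠ k → m ≠ k + ⟨1, by omega⟩ → k ≠ m + ⟨1, by omega⟩ →
    (f m) '' F ∩ (f k) '' F = ∅

namespace Necklace

variable {d : ℕ}

/-- The digit `1` of `Fin n`. -/
def one (N : Necklace d) : Fin N.n := ⟨1, by have := N.hn; omega⟩

/-- The homeomorphism `f_σ = f_{i₁} ∘ ⋯ ∘ f_{i_m}` associated to a word `σ = i₁⋯i_m`. -/
def word (N : Necklace d) : List (Fin N.n) → (Euc d ≃ₜ Euc d)
  | [] => Homeomorph.refl _
  | i :: s => (N.word s).trans (N.f i)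

/-- The copy `F_σ = f_σ(F)` of the necklace. -/
def copy (N : Necklace d) (σ : List (Fin N.n)) : Set (Euc d) := N.word σ '' N.F

/-- `c_m(x)`: the number of words `σ` of length `m` with `x ∈ F_σ`. -/
def cnt (N : Necklace d) (m : ℕ) (x : Euc d) : ℕ :=
  Set.ncard {σ : List (Fin N.n) | σ.length = m ∧ x ∈ N.copy σ}

/-- The boundary `∂_F F_k = {z_{k-1}, z_k}` of the 1-level copy `F_k` in `F`. -/
def bdry (N : Necklace d) (k : Fin N.n) : Set (Euc d) := {N.z (k - N.one), N.z k}

/-- A necklace is stable if for each `k` at least two second-level copies `F_{kj}`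
meet `∂_F F_k`. -/
def Stable (N : Necklace d) : Prop :=
  ∀ k : Fin N.n,
    2 ≤ Set.ncard {A : Set (Euc d) |
      (∃ j : Fin N.n, A = N.f k '' (N.f j '' N.F)) ∧ (A ∩ N.bdry k).Nonempty}

/-- A necklace is good if `∂_F F_k` is not contained in any second-level copy `F_{kj}`. -/
def Good (N : Necklace d) : Prop :=
  ∀ k j : Fin N.n, ¬ (N.bdry k ⊆ N.f k '' (N.f j '' N.F))

/-- A necklace is of bounded ramification if `{c_m(z_k)}_m` is bounded for each `k`. -/
def BoundedRamification (N : Necklace d) : Prop :=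
  ∀ k : Fin N.n, ∃ C : ℕ, ∀ m : ℕ, N.cnt m (N.z k) ≤ C

/-- `M_F`: the set of points that are main nodes of some copy of `F`. -/
def MF (N : Necklace d) : Set (Euc d) :=
  {x | ∃ (σ : List (Fin N.n)) (k : Fin N.n), x = N.word σ (N.z k)}

/-- A necklace has no cut points if `F \ {x}` is connected for every `x ∈ F`. -/
def NoCutPoints (N : Necklace d) : Prop :=
  ∀ x ∈ N.F, IsConnected (N.F \ {x})

/-- Property I: each 1-level copy `F_k` has an arc from `z_{k-1}` to `z_k` passing
through at least two main nodes of `F_k`. -/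
def PropertyI (N : Necklace d) : Prop :=
  ∀ k : Fin N.n, ∃ γ : Path (N.z (k - N.one)) (N.z k),
    Function.Injective γ ∧ (∀ t, γ t ∈ N.f k '' N.F) ∧
    ∃ p q : Euc d, p ≠ q ∧ (∃ j, p = N.f k (N.z j)) ∧ (∃ j, q = N.f k (N.z j)) ∧
      p ∈ Set.range γ ∧ q ∈ Set.range γ

/-- A necklace is self-similar if the maps of its NIFS are (contractive) similitudes. -/
def SelfSimilar (N : Necklace d) : Prop :=
  ∀ k : Fin N.n, ∃ c : ℝ, 0 < c ∧ c < 1 ∧ ∀ x y, dist (N.f k x) (N.f k y) = c * dist x y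

/-- The open set condition for the NIFS of a necklace. -/
def OSC (N : Necklace d) : Prop :=
  ∃ V : Set (Euc d), V.Nonempty ∧ IsOpen V ∧ IsBounded V ∧
    (∀ k, N.f k '' V ⊆ V) ∧ ∀ j k : Fin N.n, j ≠ k → N.f j '' V ∩ N.f k '' V = ∅

end Necklace

/-! The 1-level copies form a cycle, so two points of `F` are joined by an arc of consecutive
1-level copies; taking the arc of minimal forward length keeps each endpoint out of all other
copies of the arc, and if that arc would close up the cycle, its two end copies already meet and
form a chain on their own. Mapping such a chain by `f_σ` joins any two points of a `k`-level copy
`F_σ` by a chain of `(k+1)`-level copies inside `F_σ`. Replacing every link of a `k`-level chain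
by such a chain between consecutive junction points gives a `(k+1)`-level chain, since distinct
links of the old chain meet at most in those junction points. -/

section SetChain

variable {α β : Type*}

/-- `A 0, …, A L` is a chain from `x` to `u`; the paper's `(A_1, …, A_N)` has `N = L + 1`. -/
structure IsSetChain (A : ℕ → Set α) (L : ℕ) (x u : α) : Prop where
  mem_zero : x ∈ A 0
  notMem_of_pos : ∀ t, 0 < t → t ≤ L → x ∉ A t
  mem_last : u ∈ A L
  notMem_of_lt : ∀ t < L, u ∉ A t
  exists_inter_succ : ∀ t < L, ∃ w, A t ∩ A (t + 1) = {w}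
  inter_eq_empty : ∀ t t', t + 2 ≤ t' → t' ≤ L → A t ∩ A t' = ∅

namespace IsSetChain

variable {A B : ℕ → Set α} {L L₁ L₂ : ℕ} {x w u : α}

theorem const {S : Set α} (hx : x ∈ S) (hu : u ∈ S) : IsSetChain (fun _ => S) 0 x u where
  mem_zero := hx
  notMem_of_pos _ h h' := absurd h (by omega)
  mem_last := hu
  notMem_of_lt _ h := absurd h (Nat.not_lt_zero _)
  exists_inter_succ _ h := absurd h (Nat.not_lt_zero _)
  inter_eq_empty _ _ h h' := absurd h (by omega)

theorem image {f : α → β} (hf : Function.Injective f) (h : IsSetChain A L x u) :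
    IsSetChain (fun t => f '' A t) L (f x) (f u) where
  mem_zero := mem_image_of_mem f h.mem_zero
  notMem_of_pos t h₀ hL := hf.mem_set_image.not.mpr (h.notMem_of_pos t h₀ hL)
  mem_last := mem_image_of_mem f h.mem_last
  notMem_of_lt t ht := hf.mem_set_image.not.mpr (h.notMem_of_lt t ht)
  exists_inter_succ t ht := by
    obtain ⟨v, hv⟩ := h.exists_inter_succ t ht
    exact ⟨f v, by rw [← image_inter hf, hv, image_singleton]⟩
  inter_eq_empty t t' h₂ hL := by
    rw [← image_inter hf, h.inter_eq_empty t t' h₂ hL, image_empty]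

theorem init (h : IsSetChain A (L + 1) x u) (hw : A L ∩ A (L + 1) = {w}) :
    IsSetChain A L x w := by
  have hwA : w ∈ A L ∩ A (L + 1) := hw ▸ mem_singleton w
  refine ⟨h.mem_zero, fun t h₀ hL => h.notMem_of_pos t h₀ (by omega), hwA.1,
    fun t ht hwt => ?_, fun t ht => h.exists_inter_succ t (by omega),
    fun t t' h₂ hL => h.inter_eq_empty t t' h₂ (by omega)⟩
  exact (h.inter_eq_empty t (L + 1) (by omega) le_rfl).subset ⟨hwt, hwA.2⟩

theorem pair {S T : Set α} (hx : x ∈ S) (hxT : x ∉ T) (hu : u ∈ T) (huS : u ∉ S)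
    (hST : S ∩ T = {w}) : IsSetChain (fun t => if t = 0 then S else T) 1 x u where
  mem_zero := by simpa using hx
  notMem_of_pos t h₀ _ := by simpa [h₀.ne'] using hxT
  mem_last := by simpa using hu
  notMem_of_lt t ht := by simpa [Nat.lt_one_iff.mp ht] using huS
  exists_inter_succ t ht := ⟨w, by simpa [Nat.lt_one_iff.mp ht] using hST⟩
  inter_eq_empty _ _ h₂ hL := absurd h₂ (by omega)

theorem append {C : ℕ → Set α} (h₁ : IsSetChain A L₁ x w) (h₂ : IsSetChain B L₂ w u)
    (hAB : ∀ p ≤ L₁, ∀ q ≤ L₂, A p ∩ B q ⊆ {w}) (hx : ∀ q ≤ L₂, x ∉ B q)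
    (hu : ∀ p ≤ L₁, u ∉ A p) (hCA : ∀ t ≤ L₁, C t = A t) (hCB : ∀ q, C (L₁ + q + 1) = B q) :
    IsSetChain C (L₁ + L₂ + 1) x u where
  mem_zero := hCA 0 (Nat.zero_le _) ▸ h₁.mem_zero
  notMem_of_pos t h₀ hL := by
    rcases le_or_gt t L₁ with ht | ht
    · exact hCA t ht ▸ h₁.notMem_of_pos t h₀ ht
    · obtain ⟨q, rfl⟩ := Nat.exists_eq_add_of_lt ht
      exact hCB q ▸ hx q (by omega)
  mem_last := by simpa [add_right_comm, hCB] using h₂.mem_last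
  notMem_of_lt t ht := by
    rcases le_or_gt t L₁ with ht₁ | ht₁
    · exact hCA t ht₁ ▸ hu t ht₁
    · obtain ⟨q, rfl⟩ := Nat.exists_eq_add_of_lt ht₁
      exact hCB q ▸ h₂.notMem_of_lt q (by omega)
  exists_inter_succ t ht := by
    rcases lt_trichotomy t L₁ with ht₁ | rfl | ht₁
    · rw [hCA t ht₁.le, hCA (t + 1) ht₁]
      exact h₁.exists_inter_succ t ht₁
    · refine ⟨w, ?_⟩
      rw [hCA t le_rfl, show C (t + 1) = B 0 from hCB 0]
      exact (hAB t le_rfl 0 (Nat.zero_le _)).antisymm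
        (singleton_subset_iff.mpr ⟨h₁.mem_last, h₂.mem_zero⟩)
    · obtain ⟨q, rfl⟩ := Nat.exists_eq_add_of_lt ht₁
      rw [hCB q, show L₁ + q + 1 + 1 = L₁ + (q + 1) + 1 by ring, hCB (q + 1)]
      exact h₂.exists_inter_succ q (by omega)
  inter_eq_empty t t' htt' hL := by
    rcases le_or_gt t' L₁ with ht' | ht'
    · rw [hCA t (by omega), hCA t' ht']
      exact h₁.inter_eq_empty t t' htt' ht'
    obtain ⟨q', rfl⟩ := Nat.exists_eq_add_of_lt ht'
    rw [hCB q']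
    rcases le_or_gt t L₁ with ht | ht
    · rw [hCA t ht]
      refine eq_empty_of_forall_notMem fun y hy => ?_
      obtain rfl : y = w := hAB t ht q' (by omega) hy
      rcases ht.lt_or_eq with ht | rfl
      · exact h₁.notMem_of_lt t ht hy.1
      · exact h₂.notMem_of_pos q' (by omega) (by omega) hy.2
    · obtain ⟨q, rfl⟩ := Nat.exists_eq_add_of_lt ht
      rw [hCB q]
      exact h₂.inter_eq_empty q q' (by omega) (by omega)

theorem exists_refinement {P : Set α → Prop} (h : IsSetChain A L x u)
    (hA : ∀ t ≤ L, ∀ a ∈ A t, ∀ b ∈ A t,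
      ∃ L' C, IsSetChain C L' a b ∧ ∀ s ≤ L', P (C s) ∧ C s ⊆ A t) :
    ∃ L' C, IsSetChain C L' x u ∧ ∀ s ≤ L', P (C s) ∧ ∃ t ≤ L, C s ⊆ A t := by
  induction L generalizing u with
  | zero =>
    obtain ⟨L', C, hC, hCA⟩ := hA 0 le_rfl x h.mem_zero u h.mem_last
    exact ⟨L', C, hC, fun s hs => ⟨(hCA s hs).1, 0, le_rfl, (hCA s hs).2⟩⟩
  | succ L ih =>
    obtain ⟨w, hw⟩ := h.exists_inter_succ L (Nat.lt_succ_self L)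
    have hwA : w ∈ A L ∩ A (L + 1) := hw ▸ mem_singleton w
    obtain ⟨L₁, C, hC, hCA⟩ := ih (h.init hw) fun t ht => hA t (by omega)
    obtain ⟨L₂, D, hD, hDA⟩ := hA (L + 1) le_rfl w hwA.2 u h.mem_last
    have hAL : ∀ t ≤ L, A t ∩ A (L + 1) ⊆ {w} := fun t ht => by
      rcases ht.lt_or_eq with ht | rfl
      · simp [h.inter_eq_empty t (L + 1) (by omega) le_rfl]
      · exact hw.le
    refine ⟨L₁ + L₂ + 1, fun s => if s ≤ L₁ then C s else D (s - (L₁ + 1)),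
      hC.append hD ?_ ?_ ?_ (fun s hs => if_pos hs) (fun q => by simp), fun s hs => ?_⟩
    · intro p hp q hq
      obtain ⟨t, ht, hCt⟩ := (hCA p hp).2
      exact (inter_subset_inter hCt (hDA q hq).2).trans (hAL t ht)
    · exact fun q hq hxD => h.notMem_of_pos (L + 1) L.succ_pos le_rfl ((hDA q hq).2 hxD)
    · intro p hp huC
      obtain ⟨t, ht, hCt⟩ := (hCA p hp).2
      exact h.notMem_of_lt t (by omega) (hCt huC)
    · dsimp only
      split_ifs with hs₁
      · obtain ⟨hP, t, ht, hCt⟩ := hCA s hs₁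
        exact ⟨hP, t, by omega, hCt⟩
      · exact ⟨(hDA _ (by omega)).1, L + 1, le_rfl, (hDA _ (by omega)).2⟩

end IsSetChain

end SetChain

open Fin.NatCast in
theorem Fin.add_natCast_inj {n : ℕ} [NeZero n] (i : Fin n) {p q : ℕ} (hp : p < n) (hq : q < n) :
    i + (p : Fin n) = i + q ↔ p = q := by
  rw [add_right_inj, ← Fin.val_inj, Fin.val_cast_of_lt hp, Fin.val_cast_of_lt hq]

namespace Necklace

open Fin.NatCast Fin.CommRing

variable {d : ℕ} (N : Necklace d) {a b : Euc d}

instance : NeZero N.n := ⟨by have := N.hn; omega⟩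

theorem mk_one_eq_one (h : 1 < N.n) : (⟨1, h⟩ : Fin N.n) = 1 :=
  Fin.ext (by rw [Fin.val_one', Nat.mod_eq_of_lt h])

theorem image_inter_image_succ (i : Fin N.n) :
    N.f i '' N.F ∩ N.f (i + 1) '' N.F = {N.z i} := by
  simpa only [N.mk_one_eq_one] using N.hz i

theorem image_inter_image_eq_empty {i j : Fin N.n} (hij : i ≠ j) (hi : i ≠ j + 1)
    (hj : j ≠ i + 1) : N.f i '' N.F ∩ N.f j '' N.F = ∅ := by
  have h := N.hdisj i j hij
  rw [N.mk_one_eq_one] at h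
  exact h hi hj

theorem image_subset (i : Fin N.n) : N.f i '' N.F ⊆ N.F :=
  (subset_iUnion (fun k => N.f k '' N.F) i).trans N.Fattr.symm.subset

theorem exists_mem_image (ha : a ∈ N.F) : ∃ i, a ∈ N.f i '' N.F :=
  mem_iUnion.mp (N.Fattr.subset ha)

theorem arc_inter_eq_empty (i : Fin N.n) {p q : ℕ} (hpq : p + 2 ≤ q) (hq : q + 2 ≤ N.n) :
    N.f (i + p) '' N.F ∩ N.f (i + q) '' N.F = ∅ := by
  have hne : ∀ {r s : ℕ}, r < N.n → s < N.n → r ≠ s → i + (r : Fin N.n) ≠ i + s :=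
    fun hr hs hrs h => hrs ((Fin.add_natCast_inj i hr hs).mp h)
  refine N.image_inter_image_eq_empty (hne (by omega) (by omega) (by omega)) ?_ ?_ <;>
    rw [add_assoc, ← Nat.cast_add_one] <;> exact hne (by omega) (by omega) (by omega)

theorem isSetChain_arc (i : Fin N.n) {m : ℕ} (hm : m + 2 ≤ N.n) (ha : a ∈ N.f i '' N.F)
    (ha' : ∀ p, 0 < p → p ≤ m → a ∉ N.f (i + p) '' N.F) (hb : b ∈ N.f (i + m) '' N.F)
    (hb' : ∀ p < m, b ∉ N.f (i + p) '' N.F) :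
    IsSetChain (fun t : ℕ => N.f (i + t) '' N.F) m a b where
  mem_zero := by simpa using ha
  notMem_of_pos := ha'
  mem_last := hb
  notMem_of_lt := hb'
  exists_inter_succ t _ := ⟨N.z (i + t), by
    rw [Nat.cast_add_one, ← add_assoc]; exact N.image_inter_image_succ _⟩
  inter_eq_empty _ _ h₂ hL := N.arc_inter_eq_empty i h₂ (by omega)

theorem exists_isSetChain_image (ha : a ∈ N.F) (hb : b ∈ N.F) :
    ∃ L A, IsSetChain A L a b ∧ ∀ t ≤ L, ∃ i, A t = N.f i '' N.F := by
  classical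
  obtain ⟨i₀, hi₀⟩ := N.exists_mem_image ha
  obtain ⟨j₀, hj₀⟩ := N.exists_mem_image hb
  have hj₀' : b ∈ N.f (i₀ + ((j₀ - i₀).val : Fin N.n)) '' N.F := by
    rwa [Fin.cast_val_eq_self, add_sub_cancel]
  have hex : ∃ m : ℕ, ∃ i, a ∈ N.f i '' N.F ∧ b ∈ N.f (i + m) '' N.F := ⟨_, i₀, hi₀, hj₀'⟩
  obtain ⟨i, hai, hbi⟩ := Nat.find_spec hex
  set m := Nat.find hex
  have hmn : m < N.n := (Nat.find_min' hex ⟨i₀, hi₀, hj₀'⟩).trans_lt (j₀ - i₀).isLt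
  have hb' : ∀ p < m, b ∉ N.f (i + p) '' N.F := fun p hp hb => Nat.find_min hex hp ⟨i, hai, hb⟩
  have ha' : ∀ p, 0 < p → p ≤ m → a ∉ N.f (i + p) '' N.F := fun p hp hpm ha =>
    Nat.find_min hex (show m - p < m by omega)
      ⟨i + p, ha, by rwa [add_assoc, ← Nat.cast_add, Nat.add_sub_cancel' hpm]⟩
  by_cases hm : m + 2 ≤ N.n
  · exact ⟨m, _, N.isSetChain_arc i hm hai ha' hbi hb', fun t _ => ⟨_, rfl⟩⟩
  have hi : i + m + 1 = i := by
    rw [add_assoc, ← Nat.cast_add_one, show m + 1 = N.n by omega, Fin.natCast_self, add_zero]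
  have hinter := N.image_inter_image_succ (i + m)
  rw [hi, inter_comm] at hinter
  refine ⟨1, _, IsSetChain.pair hai (ha' m (by have := N.hn; omega) le_rfl) hbi
    (fun h => hb' 0 (by have := N.hn; omega) (by simpa using h)) hinter, fun t _ => ?_⟩
  exact ⟨if t = 0 then i else i + m, by split_ifs <;> rfl⟩

theorem word_append_apply (σ : List (Fin N.n)) (i : Fin N.n) (y : Euc d) :
    N.word (σ ++ [i]) y = N.word σ (N.f i y) := by
  induction σ with
  | nil => rfl
  | cons j σ ih => exact congrArg (N.f j) ih

theorem copy_append (σ : List (Fin N.n)) (i : Fin N.n) :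
    N.copy (σ ++ [i]) = N.word σ '' (N.f i '' N.F) := by
  rw [image_image]
  exact image_congr fun y _ => N.word_append_apply σ i y

theorem copy_nil : N.copy [] = N.F := image_id N.F

theorem exists_isSetChain_copy_append (σ : List (Fin N.n)) (ha : a ∈ N.copy σ)
    (hb : b ∈ N.copy σ) :
    ∃ L C, IsSetChain C L a b ∧ ∀ t ≤ L, (∃ i, C t = N.copy (σ ++ [i])) ∧ C t ⊆ N.copy σ := by
  obtain ⟨a, ha, rfl⟩ := ha
  obtain ⟨b, hb, rfl⟩ := hb
  obtain ⟨L, A, hA, hAi⟩ := N.exists_isSetChain_image ha hb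
  refine ⟨L, fun t => N.word σ '' A t, hA.image (N.word σ).injective, fun t ht => ?_⟩
  obtain ⟨i, hi⟩ := hAi t ht
  dsimp only
  rw [hi]
  exact ⟨⟨i, (N.copy_append σ i).symm⟩, image_mono (N.image_subset i)⟩

theorem exists_isSetChain_copy (k : ℕ) (ha : a ∈ N.F) (hb : b ∈ N.F) :
    ∃ L A, IsSetChain A L a b ∧
      ∀ t ≤ L, ∃ σ : List (Fin N.n), σ.length = k ∧ A t = N.copy σ := by
  induction k with
  | zero => exact ⟨0, fun _ => N.F, .const ha hb, fun _ _ => ⟨[], rfl, N.copy_nil.symm⟩⟩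
  | succ k ih =>
    obtain ⟨L, A, hA, hAσ⟩ := ih
    obtain ⟨L', C, hC, hCσ⟩ := hA.exists_refinement
      (P := fun S => ∃ σ : List (Fin N.n), σ.length = k + 1 ∧ S = N.copy σ)
      fun t ht a ha b hb => by
        obtain ⟨σ, hσ, hAt⟩ := hAσ t ht
        rw [hAt] at ha hb ⊢
        obtain ⟨L', C, hC, hCσ⟩ := N.exists_isSetChain_copy_append σ ha hb
        refine ⟨L', C, hC, fun s hs => ⟨?_, (hCσ s hs).2⟩⟩
        obtain ⟨i, hi⟩ := (hCσ s hs).1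
        exact ⟨σ ++ [i], by simp [hσ], hi⟩
    exact ⟨L', C, hC, fun s hs => (hCσ s hs).1⟩

end Necklace

theorem Necklace.exists_chain_general {d : ℕ} (N : Necklace d)
    (x : Euc d) (hx : x ∈ N.F) (u : Euc d) (hu : u ∈ N.F) (k : ℕ) :
    ∃ (M : ℕ) (A : Fin (M + 1) → Set (Euc d)),
      (∀ j, ∃ σ : List (Fin N.n), σ.length = k ∧ A j = N.copy σ) ∧
      x ∈ A 0 ∧ (∀ j, j ≠ 0 → x ∉ A j) ∧
      u ∈ A (Fin.last M) ∧ (∀ j, j ≠ Fin.last M → u ∉ A j) ∧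
      (∀ j m : Fin (M + 1), (j : ℕ) + 1 = (m : ℕ) → ∃ w, A j ∩ A m = {w}) ∧
      (∀ j m : Fin (M + 1), (j : ℕ) + 2 ≤ (m : ℕ) → A j ∩ A m = ∅) := by
  obtain ⟨L, A, hA, hAσ⟩ := N.exists_isSetChain_copy k hx hu
  refine ⟨L, fun j => A j, fun j => hAσ j j.is_le, hA.mem_zero, fun j hj => ?_, hA.mem_last,
    fun j hj => ?_, fun j m hjm => ?_, fun j m hjm => hA.inter_eq_empty j m hjm m.is_le⟩
  · exact hA.notMem_of_pos j (Nat.pos_of_ne_zero (Fin.val_ne_zero_iff.mpr hj)) j.is_le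
  · exact hA.notMem_of_lt j (lt_of_le_of_ne j.is_le (Fin.val_ne_iff.mpr hj))
  · simpa only [← hjm] using hA.exists_inter_succ j (by omega)

/-- For any necklace `F`, any `x, u ∈ F` and any `k ≥ 1`, there exists a `k`-level chain
of `F` from `x` to `u`: a finite sequence `(A_0, …, A_N)` of `k`-level copies of `F` with
`x ∈ A_0 \ ⋃_{j≥1} A_j`, `u ∈ A_N \ ⋃_{j≤N-1} A_j`, such that consecutive copies meet in
a single point and non-consecutive copies are disjoint. -/
theorem Necklace.exists_chain {d : ℕ} (N : Necklace d)
    (x : Euc d) (hx : x ∈ N.F) (u : Euc d) (hu : u ∈ N.F) (k : ℕ) (hk : 1 ≤ k) :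
    ∃ (M : ℕ) (A : Fin (M + 1) → Set (Euc d)),
      (∀ j, ∃ σ : List (Fin N.n), σ.length = k ∧ A j = N.copy σ) ∧
      x ∈ A 0 ∧ (∀ j, j ≠ 0 → x ∉ A j) ∧
      u ∈ A (Fin.last M) ∧ (∀ j, j ≠ Fin.last M → u ∉ A j) ∧
      (∀ j m : Fin (M + 1), (j : ℕ) + 1 = (m : ℕ) → ∃ w, A j ∩ A m = {w}) ∧
      (∀ j m : Fin (M + 1), (j : ℕ) + 2 ≤ (m : ℕ) → A j ∩ A m = ∅) :=
  Necklace.exists_chain_general N x hx u hu k
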